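/- Let a > b > 0, s = sqrt((b^4 + 2*a*b^3)/(a^4 + 2*a^3*b)), α = s*a, β = b, and δ = sqrt(α^4 − α²β² + β^4). Then 2*(δ − β²)*(α² − δ)/(α² − β²)² = 2*a*b/(a+b)². -/
import Mathlib


/-- For `a > b > 0`, `s = √((b⁴+2ab³)/(a⁴+2a³b))`, `α = s*a`, `β = b`,
`δ = √(α⁴ - α²β² + β⁴)`, one has `2(δ-β²)(α²-δ)/(α²-β²)² = 2ab/(a+b)²`. -/
theorem rOvR_scaled_confocal (a b : ℝ) (hb : 0 < b) (hab : b < a)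
    (s α β δ : ℝ)
    (hs : s = Real.sqrt ((b ^ 4 + 2 * a * b ^ 3) / (a ^ 4 + 2 * a ^ 3 * b)))
    (hα : α = s * a) (hβ : β = b)
    (hδ : δ = Real.sqrt (α ^ 4 - α ^ 2 * β ^ 2 + β ^ 4)) :
    2 * (δ - β ^ 2) * (α ^ 2 - δ) / (α ^ 2 - β ^ 2) ^ 2 = 2 * a * b / (a + b) ^ 2 := by
  have ha : 0 < a := hb.trans hab
  have ha0 : a ≠ 0 := ha.ne'
  have h2b : a + 2 * b ≠ 0 := by positivity
  have hs2 : s ^ 2 = (b ^ 4 + 2 * a * b ^ 3) / (a ^ 4 + 2 * a ^ 3 * b) := by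
    rw [hs, Real.sq_sqrt]; positivity
  have hα2 : α ^ 2 = b ^ 3 * (2 * a + b) / (a * (a + 2 * b)) := by
    have hd : a ^ 4 + 2 * a ^ 3 * b ≠ 0 := by positivity
    rw [hα, mul_pow, hs2]
    field_simp
    ring
  have hδ' : δ = b ^ 2 * (a ^ 2 + a * b + b ^ 2) / (a * (a + 2 * b)) := by
    have hkey : α ^ 4 - α ^ 2 * β ^ 2 + β ^ 4
        = (b ^ 2 * (a ^ 2 + a * b + b ^ 2) / (a * (a + 2 * b))) ^ 2 := by
      have : α ^ 4 = (α ^ 2) ^ 2 := by ring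
      rw [this, hα2, hβ]
      field_simp
      ring
    rw [hδ, hkey, Real.sqrt_sq (by positivity)]
  have hne : a - b ≠ 0 := sub_ne_zero.mpr hab.ne'
  have hpb : a + b ≠ 0 := by positivity
  have hne' : b - a ≠ 0 := sub_ne_zero.mpr hab.ne
  have hd2 : α ^ 2 - β ^ 2 = b ^ 2 * (b - a) * (b + a) / (a * (a + 2 * b)) := by
    rw [hα2, hβ]
    field_simp
    ring
  rw [hd2, hδ', hα2, hβ]
  have hb0 : b ≠ 0 := hb.ne'
  field_simp
  ring
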